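/- Define ex(m) = \sum_{i=0}^{s} t_i 2^{t_i} + \sum_{i=0}^{s} 2 i 2^{t_i} for m with binary expansion m = \sum_{i=0}^{s} 2^{t_i}, t_0 > ... > t_s \ge 0. Then for positive integers m_0 \le m_1, ex(m_0 + m_1) \ge ex(m_0) + ex(m_1) + 2 m_0. -/
import Mathlib


/-- Closed-form hypercube edge-isoperimetric function: for `m` with binary expansion
`m = 2^{t_0} + ... + 2^{t_s}` with `t_0 > ... > t_s`, this equals
`∑ t_i 2^{t_i} + ∑ 2 i 2^{t_i}`. -/
def ex : ℕ → ℕ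
  | 0 => 0
  | (m+1) =>
      Nat.log2 (m+1) * 2 ^ Nat.log2 (m+1) + 2 * ((m+1) - 2 ^ Nat.log2 (m+1))
        + ex ((m+1) - 2 ^ Nat.log2 (m+1))
decreasing_by
  exact Nat.sub_lt (Nat.succ_pos m) (Nat.two_pow_pos _)

lemma ex_zero : ex 0 = 0 := by rw [ex]

lemma log2_pow_add (t r : ℕ) (h : r < 2^t) : Nat.log2 (2^t + r) = t := by
  rw [Nat.log2_eq_log_two]
  exact Nat.log_eq_of_pow_le_of_lt_pow (Nat.le_add_right _ _) (by rw [pow_succ]; omega)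

lemma ex_pow_add (t r : ℕ) (h : r < 2^t) : ex (2^t + r) = t * 2^t + 2*r + ex r := by
  obtain ⟨m, hm⟩ : ∃ m, 2^t + r = m + 1 := ⟨2^t + r - 1, by have := Nat.two_pow_pos t; omega⟩
  rw [hm, ex, ← hm, log2_pow_add t r h, Nat.add_sub_cancel_left]

lemma ex_pow (t : ℕ) : ex (2^t) = t * 2^t := by
  have := ex_pow_add t 0 (Nat.two_pow_pos t)
  simpa [ex_zero] using this

lemma ex_one : ex 1 = 0 := by simpa using ex_pow 0

lemma ex_compl : ∀ t a c : ℕ, a + c = 2^t →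
    ex (2^t) + ex c + 2*t*a = ex a + 2*t*2^t := by
  intro t
  induction t with
  | zero =>
    intro a c h
    have : a = 0 ∧ c = 1 ∨ a = 1 ∧ c = 0 := by simpa using (by omega : a = 0 ∧ c = 1 ∨ a = 1 ∧ c = 0)
    rcases this with ⟨ha, hc⟩ | ⟨ha, hc⟩ <;> subst ha <;> subst hc <;>
      simp [ex_zero, ex_one]
  | succ t iht =>
    intro a c h
    have hP : 0 < 2^t := Nat.two_pow_pos t
    have hps : (2:ℕ)^(t+1) = 2^t + 2^t := by rw [pow_succ]; omega
    have hexP : ex (2^t) = t * 2^t := ex_pow t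
    have hex2P : ex (2^(t+1)) = (t+1) * 2^(t+1) := ex_pow (t+1)
    have h3 : 2*(t+1)*2^(t+1) = 4*(t*2^t) + 4*2^t := by rw [pow_succ]; ring
    have h4 : (t+1)*2^(t+1) = 2*(t*2^t) + 2*2^t := by rw [pow_succ]; ring
    have main : ∀ x y : ℕ, x + y = 2^(t+1) → x ≤ 2^t →
        ex (2^(t+1)) + ex y + 2*(t+1)*x = ex x + 2*(t+1)*2^(t+1) := by
      intro x y hxy hx
      rcases Nat.eq_or_lt_of_le hx with heq | hlt
      · have hy : y = 2^t := by omega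
        rw [heq, hy, hexP, hex2P]
        linarith [h3, h4]
      · rcases Nat.eq_zero_or_pos x with hx0 | hx0
        · have hy : y = 2^(t+1) := by omega
          rw [hx0, hy, ex_zero, hex2P]
          linarith [h3, h4]
        · obtain ⟨c', hc'⟩ : ∃ c', x + c' = 2^t := ⟨2^t - x, by omega⟩
          have hcc : y = 2^t + c' := by omega
          have hc'lt : c' < 2^t := by omega
          have hexy : ex y = t*2^t + 2*c' + ex c' := by
            rw [hcc]; exact ex_pow_add t c' hc'lt
          have hIH := iht x c' hc'
          linarith [h3, h4, hexy, hIH, hexP, hex2P]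
    rcases le_total a (2^t) with hA | hA
    · exact main a c h hA
    · have hc : c ≤ 2^t := by omega
      have hS := main c a (by omega) hc
      have h5 : 2*(t+1)*a + 2*(t+1)*c = 2*(t+1)*2^(t+1) := by
        rw [← Nat.mul_add, h]
      linarith [hS, hex2P, h5]

lemma key : ∀ n a b : ℕ, a + b ≤ n → a ≤ b → ex a + ex b + 2*a ≤ ex (a+b) := by
  intro n
  induction n using Nat.strong_induction_on with
  | _ n ih =>
  intro a b hn hab
  rcases Nat.eq_zero_or_pos b with hb0 | hb0
  · have ha0 : a = 0 := by omega
    simp [ha0, hb0, ex_zero]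
  have hsup : ∀ x y : ℕ, x + y < n → ex x + ex y ≤ ex (x+y) := by
    intro x y hxy
    rcases le_total x y with h | h
    · have := ih (x+y) hxy x y le_rfl h; omega
    · have := ih (y+x) (by omega) y x le_rfl h
      rw [Nat.add_comm y x] at this; omega
  set t := Nat.log 2 b with ht
  have h1 : 2^t ≤ b := Nat.pow_log_le_self 2 (by omega)
  have h2 : b < 2^(t+1) := Nat.lt_pow_succ_log_self (by norm_num) b
  have hP : 0 < 2^t := Nat.two_pow_pos t
  have hps : (2:ℕ)^(t+1) = 2^t + 2^t := by rw [pow_succ]; omega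
  obtain ⟨b', hb'⟩ : ∃ b', b = 2^t + b' := ⟨b - 2^t, by omega⟩
  have hb'lt : b' < 2^t := by omega
  have hexb : ex b = t*2^t + 2*b' + ex b' := by rw [hb']; exact ex_pow_add t b' hb'lt
  have h4 : (t+1)*2^(t+1) = 2*(t*2^t) + 2*2^t := by rw [pow_succ]; ring
  rcases le_or_gt (2^t) a with hA | hA
  · -- Case 1: both a and b in [2^t, 2^(t+1))
    obtain ⟨a', ha'⟩ : ∃ a', a = 2^t + a' := ⟨a - 2^t, by omega⟩
    have ha'b' : a' ≤ b' := by omega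
    have hab2 : a + b = 2^(t+1) + (a' + b') := by omega
    have hablt : a' + b' < 2^(t+1) := by omega
    have hexa : ex a = t*2^t + 2*a' + ex a' := by
      rw [ha']; exact ex_pow_add t a' (by omega)
    have hexab : ex (a+b) = (t+1)*2^(t+1) + 2*(a'+b') + ex (a'+b') := by
      rw [hab2]; exact ex_pow_add (t+1) _ hablt
    have hIH : ex a' + ex b' + 2*a' ≤ ex (a'+b') :=
      ih (a'+b') (by omega) a' b' le_rfl ha'b'
    linarith
  · rcases lt_or_ge (a + b') (2^t) with hs | hs
    · -- Case 2: a < 2^t, a + b' < 2^t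
      have hab2 : a + b = 2^t + (a+b') := by omega
      have hexab : ex (a+b) = t*2^t + 2*(a+b') + ex (a+b') := by
        rw [hab2]; exact ex_pow_add t _ hs
      have hIH : ex a + ex b' ≤ ex (a+b') := hsup a b' (by omega)
      linarith
    · -- Case 3: a < 2^t ≤ a + b'
      obtain ⟨r, hr⟩ : ∃ r, a + b' = 2^t + r := ⟨a + b' - 2^t, by omega⟩
      have hrlt : r < 2^t := by omega
      have hab2 : a + b = 2^(t+1) + r := by omega
      have hexab : ex (a+b) = (t+1)*2^(t+1) + 2*r + ex r := by
        rw [hab2]; exact ex_pow_add (t+1) r (by omega)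
      obtain ⟨A, hAe⟩ : ∃ A, a + A = 2^t := ⟨2^t - a, by omega⟩
      obtain ⟨B, hBe⟩ : ∃ B, b' + B = 2^t := ⟨2^t - b', by omega⟩
      obtain ⟨R, hRe⟩ : ∃ R, r + R = 2^t := ⟨2^t - r, by omega⟩
      have hABR : A + B = R := by omega
      have hIa := ex_compl t a A hAe
      have hIb := ex_compl t b' B hBe
      have hIr := ex_compl t r R hRe
      have hexP := ex_pow t
      have hIH : ex A + ex B ≤ ex R := by
        rw [← hABR]; exact hsup A B (by omega)
      have h5 : t*a + t*b' = t*2^t + t*r := by rw [← Nat.mul_add, hr, Nat.mul_add]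
      linarith

/-- Superadditivity: for positive integers `m₀ ≤ m₁`,
`ex(m₀ + m₁) ≥ ex(m₀) + ex(m₁) + 2 m₀`. -/
theorem ex_superadditive (m₀ m₁ : ℕ) (h0 : 0 < m₀) (h01 : m₀ ≤ m₁) :
    ex m₀ + ex m₁ + 2 * m₀ ≤ ex (m₀ + m₁) :=
  key (m₀ + m₁) m₀ m₁ le_rfl h01
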